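/- arXiv:2502.02518 — 8 statements merged into one kernel-verified Lean document; each statement's English description precedes it below -/
import Mathlib

section
/- For every D > 0 there exists a constant C ∈ (0,∞) such that for every T ∈ (0,∞) and every bounded measurable function w : [0,T]×𝕊 → ℝ, the function W(t,x) := ∫₀ᵗ ∫_𝕊 ∂_x p^𝕊(2D(t−s), x, y) w(s,y) dy ds satisfies sup_{t∈[0,T], x∈𝕊} |W(t,x)| ≤ C T^{1/2} · sup_{(s,y)∈[0,T]×𝕊} |w(s,y)|. -/
open MeasureTheory

/-- Heat kernel on the circle `ℝ/Lℤ`: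
`p^𝕊(t,x,y) = (2πt)^{-1/2} Σ_{k∈ℤ} exp(-(y-x+Lk)²/(2t))`. -/
noncomputable def heatKernelS (L t x y : ℝ) : ℝ :=
  (Real.sqrt (2 * Real.pi * t))⁻¹ * ∑' k : ℤ, Real.exp (-(y - x + L * k) ^ 2 / (2 * t))

/-- Geodesic distance on the circle `ℝ/Lℤ`. -/
noncomputable def circleDist (L x y : ℝ) : ℝ := ‖((x : AddCircle L) - (y : AddCircle L))‖

open Real

lemma summable_nat_gauss (ε c : ℝ) (hε : 0 < ε) :
    Summable (fun n : ℕ => (1 + (n:ℝ)) * Real.exp (-ε * (c + n)^2)) := by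
  set N : ℕ := ⌈2*|c|⌉₊ + 1 with hN
  rw [← summable_nat_add_iff N]
  have hsum : Summable (fun n : ℕ => (1 + ((n:ℝ) + N)) * Real.exp (-ε * ((n:ℝ) + N))) := by
    have h1 : Summable (fun n : ℕ => (1 + (n:ℝ)) * Real.exp (-ε * (n:ℝ))) := by
      have := (summable_pow_mul_exp_neg_nat_mul 0 hε).add (summable_pow_mul_exp_neg_nat_mul 1 hε)
      refine this.congr fun n => ?_
      simp only [pow_zero, pow_one, one_mul, neg_mul]
      ring
    have := (summable_nat_add_iff (f := fun n : ℕ => (1 + (n:ℝ)) * Real.exp (-ε * (n:ℝ))) N).2 h1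
    refine this.congr fun n => ?_
    push_cast
    ring_nf
  refine hsum.of_nonneg_of_le (fun n => ?_) (fun n => ?_)
  · positivity
  · set m : ℝ := ((n + N : ℕ) : ℝ) with hm
    have hcN : 2*|c| + 1 ≤ m := by
      have h1 : (2*|c| : ℝ) ≤ ⌈2*|c|⌉₊ := Nat.le_ceil _
      have hn : (0:ℝ) ≤ n := Nat.cast_nonneg n
      rw [hm, hN]
      push_cast
      linarith
    have hm0 : 0 ≤ m := Nat.cast_nonneg _
    have key : m ≤ (c + m)^2 := by
      nlinarith [abs_nonneg c, neg_abs_le c, le_abs_self c, sq_nonneg (c + m)]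
    have hexp : Real.exp (-ε * (c + m)^2) ≤ Real.exp (-ε * m) := by
      apply Real.exp_le_exp.2
      nlinarith
    have h1m : 0 ≤ 1 + m := by linarith
    have hcast : (1 + m) * Real.exp (-ε * m) = (1 + ((n + N : ℕ) : ℝ)) * Real.exp (-ε * ((n + N : ℕ) : ℝ)) := by rw [hm]
    calc (1 + ((n + N : ℕ):ℝ)) * Real.exp (-ε * (c + ((n + N : ℕ):ℝ))^2)
        = (1 + m) * Real.exp (-ε * (c + m)^2) := by rw [hm]
      _ ≤ (1 + m) * Real.exp (-ε * m) := by gcongr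
      _ ≤ _ := by rw [hm]; push_cast; exact le_refl _

lemma summable_int_gauss (ε c : ℝ) (hε : 0 < ε) :
    Summable (fun k : ℤ => (1 + |(k:ℝ)|) * Real.exp (-ε * (c + k)^2)) := by
  apply Summable.of_nat_of_neg
  · refine (summable_nat_gauss ε c hε).congr fun n => ?_
    simp
  · refine (summable_nat_gauss ε (-c) hε).congr fun n => ?_
    push_cast
    rw [abs_neg, abs_of_nonneg (Nat.cast_nonneg n)]
    ring_nf

lemma summable_master {L ε : ℝ} (hL : 0 < L) (hε : 0 < ε) (c : ℝ) :
    Summable (fun k : ℤ => (|c + L*k| + 1) * Real.exp (-ε * (c + L*k)^2)) := by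
  have base := (summable_int_gauss (ε*L^2) (c/L) (by positivity)).mul_left (|c| + L + 1)
  refine base.of_nonneg_of_le (fun k => by positivity) (fun k => ?_)
  have hfac : (c + L*k) = L * (c/L + k) := by field_simp [mul_comm]
  have hsq : (c + L*k)^2 = L^2 * (c/L + k)^2 := by rw [hfac]; ring
  have hexp : Real.exp (-ε * (c + L*k)^2) = Real.exp (-(ε*L^2) * (c/L + k)^2) := by
    rw [hsq]; ring_nf
  rw [hexp]
  have h1 : |c + L*k| + 1 ≤ (|c| + L + 1) * (1 + |(k:ℝ)|) := by
    have := abs_add_le c (L*k)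
    have h2 : |L*(k:ℝ)| = L * |(k:ℝ)| := by rw [abs_mul, abs_of_pos hL]
    have h3 : L * |(k:ℝ)| ≤ (|c| + L + 1) * |(k:ℝ)| := by
      apply mul_le_mul_of_nonneg_right _ (abs_nonneg _)
      linarith [abs_nonneg c]
    nlinarith [abs_nonneg c, abs_nonneg (k:ℝ)]
  calc (|c + L*k| + 1) * Real.exp (-(ε*L^2) * (c/L + k)^2)
      ≤ ((|c| + L + 1) * (1 + |(k:ℝ)|)) * Real.exp (-(ε*L^2) * (c/L + k)^2) := by
        gcongr
    _ = (|c| + L + 1) * ((1 + |(k:ℝ)|) * Real.exp (-(ε*L^2) * (c/L + k)^2)) := by ring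

lemma hasDerivAt_term (L τ : ℝ) (hτ : 0 < τ) (y : ℝ) (k : ℤ) (x' : ℝ) :
    HasDerivAt (fun x'' => Real.exp (-(y - x'' + L*k)^2 / (2*τ)))
      ((y - x' + L*k)/τ * Real.exp (-(y - x' + L*k)^2 / (2*τ))) x' := by
  have h1 : HasDerivAt (fun x'' : ℝ => y - x'' + L*k) (-1) x' := by
    simpa using ((hasDerivAt_id x').const_sub y).add_const (L*(k:ℝ))
  have h2 := ((h1.pow 2).neg.div_const (2*τ)).exp
  convert h2 using 1
  · rfl
  have hτ' : τ ≠ 0 := ne_of_gt hτ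
  simp only [Pi.pow_apply, Pi.neg_apply]
  field_simp
  ring

lemma hasDerivAt_heat (L τ : ℝ) (hL : 0 < L) (hτ : 0 < τ) (y x : ℝ) :
    HasDerivAt (fun x' => heatKernelS L τ x' y)
      ((Real.sqrt (2*Real.pi*τ))⁻¹ *
        ∑' k : ℤ, (y - x + L*k)/τ * Real.exp (-(y - x + L*k)^2 / (2*τ))) x := by
  simp only [heatKernelS]
  apply HasDerivAt.const_mul
  have hball : x ∈ Metric.ball x 1 := Metric.mem_ball_self one_pos
  refine hasDerivAt_tsum_of_isPreconnected
    (u := fun k : ℤ => (Real.exp τ⁻¹ / τ) *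
      ((|y - x + L*k| + 1) * Real.exp (-(4*τ)⁻¹ * (y - x + L*k)^2)))
    (g' := fun k x' => (y - x' + L*k)/τ * Real.exp (-(y - x' + L*k)^2 / (2*τ)))
    ?_ Metric.isOpen_ball (convex_ball x 1).isPreconnected
    (fun k x' _ => hasDerivAt_term L τ hτ y k x') ?_ hball ?_ hball
  · exact (summable_master hL (by positivity) (y - x)).mul_left _
  · intro k x' hx'
    set a := y - x + L*k with ha
    set z := y - x' + L*k with hz
    have hδ : |x - x'| ≤ 1 := by
      have := Metric.mem_ball.1 hx'
      rw [Real.dist_eq] at this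
      rw [abs_sub_comm]
      linarith
    have hδ2 : (x - x')^2 ≤ 1 := by
      rw [← one_pow 2]
      exact sq_le_sq' (by linarith [abs_le.1 hδ]) (by linarith [abs_le.1 hδ])
    have hza : z = a + (x - x') := by rw [hz, ha]; ring
    have habs : |z| ≤ |a| + 1 := by
      rw [hza]
      calc |a + (x - x')| ≤ |a| + |x - x'| := abs_add_le _ _
        _ ≤ |a| + 1 := by linarith
    have hsq : a^2 - 4 ≤ 2*z^2 := by
      rw [hza]
      nlinarith [sq_nonneg (a + 2*(x - x')), hδ2]
    have hexp : Real.exp (-z^2/(2*τ)) ≤ Real.exp τ⁻¹ * Real.exp (-(4*τ)⁻¹ * a^2) := by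
      rw [← Real.exp_add]
      apply Real.exp_le_exp.2
      have key : -z^2/(2*τ) ≤ (4 - a^2)/(4*τ) := by
        rw [div_le_div_iff₀ (by positivity) (by positivity)]
        nlinarith
      have e2 : (4 - a^2)/(4*τ) = τ⁻¹ + -(4*τ)⁻¹ * a^2 := by field_simp; ring
      linarith
    have hnorm : ‖(y - x' + L*k)/τ * Real.exp (-(y - x' + L*k)^2 / (2*τ))‖
        = |z|/τ * Real.exp (-z^2/(2*τ)) := by
      rw [Real.norm_eq_abs, abs_mul, abs_div, abs_of_pos hτ,
        abs_of_pos (Real.exp_pos _), ← hz]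
    rw [hnorm]
    calc |z|/τ * Real.exp (-z^2/(2*τ))
        ≤ (|a| + 1)/τ * (Real.exp τ⁻¹ * Real.exp (-(4*τ)⁻¹ * a^2)) := by
          apply mul_le_mul (by gcongr) hexp (Real.exp_pos _).le (by positivity)
      _ = (Real.exp τ⁻¹ / τ) * ((|a| + 1) * Real.exp (-(4*τ)⁻¹ * a^2)) := by ring
  · -- summable at x
    have base := summable_master hL (by positivity : (0:ℝ) < (2*τ)⁻¹) (y - x)
    refine base.of_nonneg_of_le (fun k => (Real.exp_pos _).le) (fun k => ?_)
    have : -(y - x + L*k)^2/(2*τ) = -(2*τ)⁻¹ * (y - x + L*k)^2 := by field_simp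
    rw [this]
    nlinarith [Real.exp_pos (-(2*τ)⁻¹ * (y - x + L*k)^2), abs_nonneg (y - x + L*(k:ℝ))]

lemma summable_phi {L τ : ℝ} (hL : 0 < L) (hτ : 0 < τ) (c : ℝ) :
    Summable (fun k : ℤ => |c + L*k|/τ * Real.exp (-(c + L*k)^2/(2*τ))) := by
  have base := (summable_master hL (by positivity : (0:ℝ) < (2*τ)⁻¹) c).mul_left τ⁻¹
  refine base.of_nonneg_of_le (fun k => by positivity) (fun k => ?_)
  have he : -(c + L*k)^2/(2*τ) = -(2*τ)⁻¹ * (c + L*k)^2 := by field_simp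
  rw [he]
  have h1 : |c + L*k| ≤ |c + L*k| + 1 := by linarith
  have h2 : (0:ℝ) < Real.exp (-(2*τ)⁻¹ * (c + L*k)^2) := Real.exp_pos _
  rw [div_mul_eq_mul_div, div_le_iff₀ hτ]
  calc |c + L*k| * Real.exp (-(2*τ)⁻¹ * (c + L*k)^2)
      ≤ (|c + L*k| + 1) * Real.exp (-(2*τ)⁻¹ * (c + L*k)^2) := by gcongr
    _ = τ⁻¹ * ((|c + L*k| + 1) * Real.exp (-(2*τ)⁻¹ * (c + L*k)^2)) * τ := by
        field_simp

lemma pairwise_disjoint_Ico_zsmul (L a : ℝ) (hL : 0 < L) :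
    Pairwise (Function.onFun Disjoint
      (fun k : ℤ => Set.Ico (a + k • L) (a + (k+1) • L))) := by
  intro i j hij
  have key : ∀ p q : ℤ, p < q →
      Disjoint (Set.Ico (a + p • L) (a + (p+1) • L)) (Set.Ico (a + q • L) (a + (q+1) • L)) := by
    intro p q hpq
    apply Set.Ico_disjoint_Ico.2
    have h1 : a + (p+1) • L ≤ a + q • L := by
      have : (p+1) • L ≤ q • L := by
        rw [zsmul_eq_mul, zsmul_eq_mul]
        apply mul_le_mul_of_nonneg_right _ hL.le
        exact_mod_cast by omega
      linarith
    calc min (a + (p+1) • L) (a + (q+1) • L) ≤ a + (p+1) • L := min_le_left _ _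
      _ ≤ a + q • L := h1
      _ ≤ max (a + p • L) (a + q • L) := le_max_right _ _
  rcases lt_or_gt_of_ne hij with h | h
  · exact key _ _ h
  · exact (key _ _ h).symm

lemma integral_phi_sum {L τ : ℝ} (x : ℝ) (hL : 0 < L) (hτ : 0 < τ) :
    Integrable (fun y => ∑' k : ℤ, |y - x + L*k|/τ * Real.exp (-(y - x + L*k)^2/(2*τ)))
      (volume.restrict (Set.Ico 0 L)) ∧
    ∫ y in Set.Ico (0:ℝ) L,
      (∑' k : ℤ, |y - x + L*k|/τ * Real.exp (-(y - x + L*k)^2/(2*τ))) = 2 := by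
  set φ : ℝ → ℝ := fun z => |z|/τ * Real.exp (-z^2/(2*τ)) with hφ
  have hφm : Measurable φ := by
    apply Measurable.mul
    · exact measurable_id.abs.div_const τ
    · exact (((measurable_id.pow_const 2).neg).div_const (2*τ)).exp
  have hφnn : ∀ z, 0 ≤ φ z := fun z => by positivity
  have hb : (0:ℝ) < (2*τ)⁻¹ := by positivity
  -- integrability of φ on ℝ
  have hφint : Integrable φ := by
    have h0 := integrable_rpow_mul_exp_neg_mul_sq hb (by norm_num : (-1:ℝ) < 1)
    have h1 : Integrable (fun z : ℝ => |z * Real.exp (-(2*τ)⁻¹ * z^2)|) := by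
      apply Integrable.abs
      refine h0.congr (ae_of_all _ fun z => ?_)
      simp [Real.rpow_one]
    refine (h1.const_mul τ⁻¹).congr (ae_of_all _ fun z => ?_)
    show τ⁻¹ * |z * Real.exp (-(2*τ)⁻¹ * z^2)| = φ z
    simp only [hφ]
    rw [abs_mul, abs_of_pos (Real.exp_pos _)]
    have he : -z^2/(2*τ) = -(2*τ)⁻¹ * z^2 := by field_simp
    rw [he]
    ring
  -- value of the integral of φ
  have hφval : ∫ z, φ z = 2 := by
    have comp : ∫ z, φ z = ∫ z, (fun u => u/τ * Real.exp (-(2*τ)⁻¹ * u^2)) |z| := by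
      congr 1
      funext z
      simp only [hφ]
      rw [sq_abs]
      have : -z^2/(2*τ) = -(2*τ)⁻¹ * z^2 := by field_simp
      rw [this]
    have hca := integral_comp_abs (f := fun u => u/τ * Real.exp (-(2*τ)⁻¹ * u^2))
    rw [comp, hca]
    have hval : ∫ u in Set.Ioi (0:ℝ), u/τ * Real.exp (-(2*τ)⁻¹ * u^2) = 1 := by
      have base := integral_rpow_mul_exp_neg_mul_rpow (by norm_num : (0:ℝ) < 2)
        (by norm_num : (-1:ℝ) < 1) hb
      have conv : ∫ u in Set.Ioi (0:ℝ), u/τ * Real.exp (-(2*τ)⁻¹ * u^2)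
          = τ⁻¹ * ∫ u in Set.Ioi (0:ℝ), u ^ (1:ℝ) * Real.exp (-(2*τ)⁻¹ * u ^ (2:ℝ)) := by
        rw [← integral_const_mul]
        refine setIntegral_congr_fun measurableSet_Ioi (fun u hu => ?_)
        rw [Real.rpow_one, ← Real.rpow_natCast u 2]
        push_cast
        ring
      rw [conv, base, show ((1:ℝ)+1)/2 = 1 by norm_num, Real.Gamma_one,
        show (-((1:ℝ)+1)/2) = (-1:ℝ) by norm_num, Real.rpow_neg_one]
      field_simp
    rw [hval]
    ring
  -- periodization
  have hgoal1 : (fun y => ∑' k : ℤ, |y - x + L*k|/τ * Real.exp (-(y - x + L*k)^2/(2*τ)))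
      = fun y => ∑' k : ℤ, φ (y - x + L*k) := rfl
  set h : ℝ → ℝ := fun y => ∑' k : ℤ, φ (y - x + L*k) with hh
  have hsum : ∀ y : ℝ, Summable (fun k : ℤ => φ (y - x + L*k)) :=
    fun y => summable_phi hL hτ (y - x)
  have hnn : ∀ y, 0 ≤ h y := fun y => tsum_nonneg (fun k => hφnn _)
  have hofReal : ∀ y : ℝ, ENNReal.ofReal (h y) = ∑' k : ℤ, ENNReal.ofReal (φ (y - x + L*k)) :=
    fun y => ENNReal.ofReal_tsum_of_nonneg (fun k => hφnn _) (hsum y)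
  have hmeask : ∀ k : ℤ, Measurable (fun y : ℝ => φ (y - x + L*k)) := fun k =>
    hφm.comp ((measurable_id.sub_const x).add_const (L*k))
  have hhm : Measurable h := by
    have heq : h = fun y => (∑' k : ℤ, ENNReal.ofReal (φ (y - x + L*k))).toReal := by
      funext y
      rw [← hofReal y, ENNReal.toReal_ofReal (hnn y)]
    rw [heq]
    exact (Measurable.ennreal_tsum (fun k => (hmeask k).ennreal_ofReal)).ennreal_toReal
  have hshift : ∀ k : ℤ, ∫⁻ y in Set.Ico (0:ℝ) L, ENNReal.ofReal (φ (y - x + L*k))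
      = ∫⁻ z in Set.Ico (-x + k • L) (-x + (k+1) • L), ENNReal.ofReal (φ z) := by
    intro k
    have hmp := measurePreserving_add_right (volume : Measure ℝ) (L*k - x)
    have hme := measurableEmbedding_addRight (L*k - x)
    have hkey := hmp.setLIntegral_comp_preimage_emb hme (fun z => ENNReal.ofReal (φ z))
      (Set.Ico (-x + k • L) (-x + (k+1) • L))
    have seteq : (fun a : ℝ => a + (L*k - x)) ⁻¹' (Set.Ico (-x + k • L) (-x + (k+1) • L))
        = Set.Ico (0:ℝ) L := by
      ext z
      simp only [Set.mem_preimage, Set.mem_Ico, zsmul_eq_mul]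
      push_cast
      constructor
      · rintro ⟨h1, h2⟩
        constructor <;> nlinarith
      · rintro ⟨h1, h2⟩
        constructor <;> nlinarith
    rw [seteq] at hkey
    rw [← hkey]
    refine setLIntegral_congr_fun measurableSet_Ico (fun y _ => ?_)
    congr 1
    ring_nf
  have hlin : ∫⁻ y in Set.Ico (0:ℝ) L, ENNReal.ofReal (h y) = ENNReal.ofReal 2 := by
    calc ∫⁻ y in Set.Ico (0:ℝ) L, ENNReal.ofReal (h y)
        = ∫⁻ y in Set.Ico (0:ℝ) L, ∑' k : ℤ, ENNReal.ofReal (φ (y - x + L*k)) :=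
          lintegral_congr fun y => hofReal y
      _ = ∑' k : ℤ, ∫⁻ y in Set.Ico (0:ℝ) L, ENNReal.ofReal (φ (y - x + L*k)) :=
          lintegral_tsum (fun k => ((hmeask k).ennreal_ofReal).aemeasurable)
      _ = ∑' k : ℤ, ∫⁻ z in Set.Ico (-x + k • L) (-x + (k+1) • L), ENNReal.ofReal (φ z) :=
          tsum_congr hshift
      _ = ∫⁻ z in ⋃ k : ℤ, Set.Ico (-x + k • L) (-x + (k+1) • L), ENNReal.ofReal (φ z) :=
          (lintegral_iUnion (fun k => measurableSet_Ico)
            (pairwise_disjoint_Ico_zsmul L (-x) hL) _).symm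
      _ = ∫⁻ z, ENNReal.ofReal (φ z) := by
          rw [iUnion_Ico_add_zsmul hL (-x), Measure.restrict_univ]
      _ = ENNReal.ofReal (∫ z, φ z) :=
          (ofReal_integral_eq_lintegral_ofReal hφint (ae_of_all _ hφnn)).symm
      _ = ENNReal.ofReal 2 := by rw [hφval]
  constructor
  · rw [hgoal1]
    refine ⟨hhm.aestronglyMeasurable, ?_⟩
    rw [hasFiniteIntegral_iff_ofReal (ae_of_all _ hnn)]
    rw [hlin]
    exact ENNReal.ofReal_lt_top
  · show ∫ y in Set.Ico (0:ℝ) L, h y = 2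
    rw [integral_eq_lintegral_of_nonneg_ae (ae_of_all _ hnn) hhm.aestronglyMeasurable,
      hlin, ENNReal.toReal_ofReal (by norm_num : (0:ℝ) ≤ 2)]

lemma inner_bound (L τ : ℝ) (hL : 0 < L) (hτ : 0 < τ) (x : ℝ) (v : ℝ → ℝ) (M : ℝ)
    (hM0 : 0 ≤ M) (hv : ∀ y, |v y| ≤ M) :
    ‖∫ y in Set.Ico (0:ℝ) L, deriv (fun x' => heatKernelS L τ x' y) x * v y‖ ≤
      (Real.sqrt (2*Real.pi*τ))⁻¹ * 2 * M := by
  obtain ⟨hint, hval⟩ := integral_phi_sum x hL hτ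
  set c₀ : ℝ := (Real.sqrt (2*Real.pi*τ))⁻¹ with hc₀
  have hc₀nn : 0 ≤ c₀ := inv_nonneg.2 (Real.sqrt_nonneg _)
  set S : ℝ → ℝ := fun y => ∑' k : ℤ, |y - x + L*k|/τ * Real.exp (-(y - x + L*k)^2/(2*τ))
    with hS
  have hSnn : ∀ y, 0 ≤ S y := fun y => tsum_nonneg (fun k => by positivity)
  have hbnd : ∀ y, ‖deriv (fun x' => heatKernelS L τ x' y) x * v y‖ ≤ c₀ * M * S y := by
    intro y
    have hd := (hasDerivAt_heat L τ hL hτ y x).deriv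
    rw [Real.norm_eq_abs, abs_mul, hd]
    have hsumn : Summable (fun k : ℤ =>
        ‖(y - x + L*k)/τ * Real.exp (-(y - x + L*k)^2 / (2*τ))‖) := by
      refine (summable_phi hL hτ (y - x)).congr (fun k => ?_)
      rw [Real.norm_eq_abs, abs_mul, abs_div, abs_of_pos hτ, abs_of_pos (Real.exp_pos _)]
    have htsum : |∑' k : ℤ, (y - x + L*k)/τ * Real.exp (-(y - x + L*k)^2 / (2*τ))| ≤ S y := by
      have h2 := norm_tsum_le_tsum_norm hsumn
      rw [Real.norm_eq_abs] at h2
      refine h2.trans (le_of_eq (tsum_congr fun k => ?_))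
      rw [Real.norm_eq_abs, abs_mul, abs_div, abs_of_pos hτ, abs_of_pos (Real.exp_pos _)]
    have h1 : |c₀ * ∑' k : ℤ, (y - x + L*k)/τ * Real.exp (-(y - x + L*k)^2 / (2*τ))|
        ≤ c₀ * S y := by
      rw [abs_mul, abs_of_nonneg hc₀nn]
      exact mul_le_mul_of_nonneg_left htsum hc₀nn
    calc |c₀ * ∑' k : ℤ, (y - x + L*k)/τ * Real.exp (-(y - x + L*k)^2 / (2*τ))| * |v y|
        ≤ (c₀ * S y) * M := mul_le_mul h1 (hv y) (abs_nonneg _) (mul_nonneg hc₀nn (hSnn y))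
      _ = c₀ * M * S y := by ring
  have hgint : Integrable (fun y => c₀ * M * S y) (volume.restrict (Set.Ico 0 L)) :=
    (hint.const_mul (c₀ * M))
  calc ‖∫ y in Set.Ico (0:ℝ) L, deriv (fun x' => heatKernelS L τ x' y) x * v y‖
      ≤ ∫ y in Set.Ico (0:ℝ) L, c₀ * M * S y :=
        norm_integral_le_of_norm_le hgint (ae_of_all _ hbnd)
    _ = c₀ * M * ∫ y in Set.Ico (0:ℝ) L, S y := integral_const_mul _ _
    _ = c₀ * M * 2 := by rw [hval]
    _ = c₀ * 2 * M := by ring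


/-- For every `D > 0` there is `C > 0` such that for every `T > 0` and every bounded
measurable `w : [0,T]×𝕊 → ℝ`, the function
`W(t,x) = ∫₀ᵗ ∫_𝕊 ∂_x p^𝕊(2D(t−s),x,y) w(s,y) dy ds` satisfies
`sup_{[0,T]×𝕊} |W| ≤ C √T · sup |w|`. -/
theorem duhamel_gradient_sup_bound (L : ℝ) (hL : 0 < L) (D : ℝ) (hD : 0 < D) :
    ∃ C : ℝ, 0 < C ∧ ∀ T : ℝ, 0 < T → ∀ w : ℝ → ℝ → ℝ,
      Measurable (fun q : ℝ × ℝ => w q.1 q.2) →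
      (∀ s, Function.Periodic (w s) L) →
      ∀ M : ℝ, (∀ s ∈ Set.Icc (0:ℝ) T, ∀ y, |w s y| ≤ M) →
      ∀ t ∈ Set.Icc (0:ℝ) T, ∀ x : ℝ,
        |∫ s in (0:ℝ)..t, ∫ y in Set.Ico (0:ℝ) L,
            deriv (fun x' => heatKernelS L (2 * D * (t - s)) x' y) x * w s y| ≤
          C * Real.sqrt T * M := by
  refine ⟨4 * (Real.sqrt (4*Real.pi*D))⁻¹, by positivity, ?_⟩
  intro T hT w hw hper M hM t ht x
  have hM0 : 0 ≤ M := le_trans (abs_nonneg _) (hM 0 ⟨le_refl 0, hT.le⟩ 0)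
  have ht0 : 0 ≤ t := ht.1
  set c₁ : ℝ := (Real.sqrt (4*Real.pi*D))⁻¹ with hc₁def
  have hc₁ : 0 ≤ c₁ := by positivity
  set G : ℝ → ℝ := fun s => 2*M*c₁ * (t - s) ^ (-(1/2) : ℝ) with hG
  have hGint : IntervalIntegrable G volume 0 t := by
    have base : IntervalIntegrable (fun u : ℝ => u ^ (-(1/2):ℝ)) volume 0 t :=
      intervalIntegral.intervalIntegrable_rpow' (by norm_num)
    have h2 := base.comp_sub_left t
    have h3 : IntervalIntegrable (fun s : ℝ => (t - s) ^ (-(1/2):ℝ)) volume 0 t := by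
      simpa using h2.symm
    exact h3.const_mul _
  have haet : ∀ᵐ s ∂(volume.restrict (Set.uIoc 0 t)), s ≠ t := by
    apply ae_restrict_of_ae
    refine ae_iff.2 ?_
    have hset : {a : ℝ | ¬ a ≠ t} = {t} := by ext a; simp
    rw [hset]
    exact measure_singleton t
  have hbound : ∀ᵐ s ∂(volume.restrict (Set.uIoc 0 t)),
      ‖∫ y in Set.Ico (0:ℝ) L,
        deriv (fun x' => heatKernelS L (2*D*(t-s)) x' y) x * w s y‖ ≤ G s := by
    filter_upwards [ae_restrict_mem measurableSet_uIoc, haet] with s hs hst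
    rw [Set.uIoc_of_le ht0] at hs
    have hst' : s < t := lt_of_le_of_ne hs.2 hst
    have hτ : 0 < 2*D*(t-s) := by nlinarith
    have hsmem : s ∈ Set.Icc 0 T := ⟨hs.1.le, le_trans hs.2 ht.2⟩
    have h1 := inner_bound L (2*D*(t-s)) hL hτ x (w s) M hM0 (fun y => hM s hsmem y)
    refine h1.trans ?_
    have hts : 0 < t - s := by linarith
    have e1 : Real.sqrt (2*Real.pi*(2*D*(t-s))) = Real.sqrt (4*Real.pi*D) * Real.sqrt (t-s) := by
      rw [← Real.sqrt_mul (by positivity)]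
      ring_nf
    have e2 : (t - s) ^ (-(1/2):ℝ) = (Real.sqrt (t-s))⁻¹ := by
      rw [Real.rpow_neg hts.le, Real.sqrt_eq_rpow]
    simp only [hG]
    rw [e1, e2, mul_inv]
    apply le_of_eq
    ring
  have hkey := intervalIntegral.norm_integral_le_abs_of_norm_le hbound hGint
  have hrint : ∫ s in (0:ℝ)..t, (t - s)^(-(1/2):ℝ) = 2 * Real.sqrt t := by
    rw [intervalIntegral.integral_comp_sub_left (fun u => u ^ (-(1/2):ℝ)) t]
    simp only [sub_self, sub_zero]
    rw [integral_rpow (Or.inl (by norm_num))]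
    rw [show (-(1/2):ℝ) + 1 = 1/2 by norm_num, Real.zero_rpow (by norm_num),
      ← Real.sqrt_eq_rpow]
    ring
  have hGval : ∫ s in (0:ℝ)..t, G s = 2*M*c₁ * (2 * Real.sqrt t) := by
    rw [hG]
    rw [intervalIntegral.integral_const_mul, hrint]
  have hfin : |∫ s in (0:ℝ)..t, G s| = 2*M*c₁*(2*Real.sqrt t) := by
    rw [hGval, abs_of_nonneg (by positivity)]
  have hnorm : |∫ s in (0:ℝ)..t, ∫ y in Set.Ico (0:ℝ) L,
      deriv (fun x' => heatKernelS L (2*D*(t-s)) x' y) x * w s y|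
      ≤ 2*M*c₁*(2*Real.sqrt t) := by
    rw [← Real.norm_eq_abs, ← hfin]
    exact hkey
  refine hnorm.trans ?_
  have hsq : Real.sqrt t ≤ Real.sqrt T := Real.sqrt_le_sqrt ht.2
  calc 2*M*c₁*(2*Real.sqrt t) ≤ 2*M*c₁*(2*Real.sqrt T) := by gcongr
    _ = 4 * c₁ * Real.sqrt T * M := by ring
end

section
/- For all m, k ∈ ℤ/nℤ, the function ν satisfies the discrete Poisson equation ν_m^{(k+1)} − 2 ν_m^{(k)} + ν_m^{(k−1)} = δ̂_m^{(k)}. -/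
/-- The Kronecker delta `δ_m^{(k)}` on `ℤ/nℤ`. -/
def cycDelta (n : ℕ) (m k : ZMod n) : ℝ := if k = m then 1 else 0

/-- Graph distance `|x|_n` from `0` on the `n`-cycle. -/
def cycNorm (n : ℕ) [NeZero n] (x : ZMod n) : ℕ := min x.val (n - x.val)

/-- `δ̂_m^{(k)} := δ_m^{(k)} − (1/N)·𝟙{|k−m|_n ≤ (N−1)/2}`. -/
noncomputable def deltaHat (n N : ℕ) [NeZero n] (m k : ZMod n) : ℝ :=
  cycDelta n m k - (1 / (N : ℝ)) * (if cycNorm n (k - m) ≤ (N - 1) / 2 then 1 else 0)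

/-- `ν_m^{(k)} := −(1/N) Σ_{j=1}^{(N−1)/2} Σ_{l=1}^{j} Σ_{i=1}^{j} δ_m^{(k−l+i)}`. -/
noncomputable def nuFun (n N : ℕ) (m k : ZMod n) : ℝ :=
  -(1 / (N : ℝ)) * ∑ j ∈ Finset.Icc 1 ((N - 1) / 2), ∑ l ∈ Finset.Icc 1 j,
      ∑ i ∈ Finset.Icc 1 j, cycDelta n m (k - (l : ZMod n) + (i : ZMod n))

private lemma tele1 (n : ℕ) (f : ZMod n → ℝ) (c : ZMod n) (j : ℕ) :
    ∑ i ∈ Finset.Icc 1 j, (f (c + (i : ZMod n) + 1) - f (c + (i : ZMod n)))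
      = f (c + (j : ZMod n) + 1) - f (c + 1) := by
  induction j with
  | zero => simp
  | succ j ih =>
    rw [Finset.sum_Icc_succ_top (by omega : 1 ≤ j + 1), ih]
    push_cast
    ring_nf

private lemma tele2 (n : ℕ) (f : ZMod n → ℝ) (c : ZMod n) (j : ℕ) :
    ∑ l ∈ Finset.Icc 1 j, (f (c - (l : ZMod n) + 1) - f (c - (l : ZMod n)))
      = f c - f (c - (j : ZMod n)) := by
  induction j with
  | zero => simp
  | succ j ih =>
    rw [Finset.sum_Icc_succ_top (by omega : 1 ≤ j + 1), ih]
    push_cast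
    ring_nf

private lemma key1 (n : ℕ) (m k : ZMod n) (j : ℕ) :
    ((∑ l ∈ Finset.Icc 1 j, ∑ i ∈ Finset.Icc 1 j,
        cycDelta n m (k + 1 - (l : ZMod n) + (i : ZMod n)))
      - 2 * ∑ l ∈ Finset.Icc 1 j, ∑ i ∈ Finset.Icc 1 j,
        cycDelta n m (k - (l : ZMod n) + (i : ZMod n)))
      + ∑ l ∈ Finset.Icc 1 j, ∑ i ∈ Finset.Icc 1 j,
        cycDelta n m (k - 1 - (l : ZMod n) + (i : ZMod n))
    = cycDelta n m (k + (j : ZMod n)) + cycDelta n m (k - (j : ZMod n))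
        - 2 * cycDelta n m k := by
  have hA : ∀ c : ZMod n,
      (∑ i ∈ Finset.Icc 1 j, cycDelta n m (c + (i : ZMod n) + 1))
        - ∑ i ∈ Finset.Icc 1 j, cycDelta n m (c + (i : ZMod n))
      = cycDelta n m (c + (j : ZMod n) + 1) - cycDelta n m (c + 1) := by
    intro c
    rw [← Finset.sum_sub_distrib]
    exact tele1 n (cycDelta n m) c j
  have e1 : (∑ l ∈ Finset.Icc 1 j, ∑ i ∈ Finset.Icc 1 j,
        cycDelta n m (k + 1 - (l : ZMod n) + (i : ZMod n)))
      - ∑ l ∈ Finset.Icc 1 j, ∑ i ∈ Finset.Icc 1 j,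
        cycDelta n m (k - (l : ZMod n) + (i : ZMod n))
      = ∑ l ∈ Finset.Icc 1 j, (cycDelta n m (k - (l : ZMod n) + (j : ZMod n) + 1)
          - cycDelta n m (k - (l : ZMod n) + 1)) := by
    rw [← Finset.sum_sub_distrib]
    refine Finset.sum_congr rfl fun l _ => ?_
    have harg : ∀ i : ℕ, k + 1 - (l : ZMod n) + (i : ZMod n)
        = k - (l : ZMod n) + (i : ZMod n) + 1 := fun i => by ring
    simp_rw [harg]
    exact hA (k - (l : ZMod n))
  have e2 : (∑ l ∈ Finset.Icc 1 j, ∑ i ∈ Finset.Icc 1 j,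
        cycDelta n m (k - (l : ZMod n) + (i : ZMod n)))
      - ∑ l ∈ Finset.Icc 1 j, ∑ i ∈ Finset.Icc 1 j,
        cycDelta n m (k - 1 - (l : ZMod n) + (i : ZMod n))
      = ∑ l ∈ Finset.Icc 1 j, (cycDelta n m (k - (l : ZMod n) + (j : ZMod n))
          - cycDelta n m (k - (l : ZMod n))) := by
    rw [← Finset.sum_sub_distrib]
    refine Finset.sum_congr rfl fun l _ => ?_
    have harg : ∀ i : ℕ, k - (l : ZMod n) + (i : ZMod n)
        = k - 1 - (l : ZMod n) + (i : ZMod n) + 1 := fun i => by ring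
    have g2 : k - (l : ZMod n) = k - 1 - (l : ZMod n) + 1 := by ring
    simp_rw [harg]
    rw [g2]
    exact hA (k - 1 - (l : ZMod n))
  have h1 := tele2 n (fun x => cycDelta n m (x + (j : ZMod n))) k j
  have hk : k - (j : ZMod n) + (j : ZMod n) = k := by ring
  rw [hk] at h1
  have h2 := tele2 n (cycDelta n m) k j
  have hswap : ∀ l : ℕ, (cycDelta n m (k - (l:ZMod n) + (j:ZMod n) + 1)
      - cycDelta n m (k - (l:ZMod n) + 1))
      - (cycDelta n m (k - (l:ZMod n) + (j:ZMod n)) - cycDelta n m (k - (l:ZMod n)))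
      = (cycDelta n m (k - (l:ZMod n) + 1 + (j:ZMod n))
      - cycDelta n m (k - (l:ZMod n) + (j:ZMod n)))
      - (cycDelta n m (k - (l:ZMod n) + 1) - cycDelta n m (k - (l:ZMod n))) := by
    intro l
    have : k - (l:ZMod n) + (j:ZMod n) + 1 = k - (l:ZMod n) + 1 + (j:ZMod n) := by ring
    rw [this]; ring
  have e3 : ∑ l ∈ Finset.Icc 1 j, ((cycDelta n m (k - (l:ZMod n) + (j:ZMod n) + 1)
      - cycDelta n m (k - (l:ZMod n) + 1))
      - (cycDelta n m (k - (l:ZMod n) + (j:ZMod n)) - cycDelta n m (k - (l:ZMod n))))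
      = (cycDelta n m (k + (j:ZMod n)) - cycDelta n m k)
        - (cycDelta n m k - cycDelta n m (k - (j:ZMod n))) := by
    simp_rw [hswap]
    rw [Finset.sum_sub_distrib, h1, h2]
  rw [Finset.sum_sub_distrib] at e3
  rw [← e1, ← e2] at e3
  linarith

private lemma indicator_eq (n J : ℕ) [NeZero n] (hn : 2 * J + 1 < n) (m k : ZMod n) :
    (if cycNorm n (k - m) ≤ J then (1 : ℝ) else 0)
      = cycDelta n m k + ∑ j ∈ Finset.Icc 1 J, cycDelta n m (k + (j : ZMod n))
        + ∑ j ∈ Finset.Icc 1 J, cycDelta n m (k - (j : ZMod n)) := by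
  set x := k - m with hx
  set v := x.val with hv
  have hvn : v < n := ZMod.val_lt x
  clear_value v x
  have hδk : cycDelta n m k = if v = 0 then (1 : ℝ) else 0 := by
    have hcond : (k = m) ↔ (v = 0) := by
      rw [hv, ZMod.val_eq_zero, hx, sub_eq_zero]
    simp only [cycDelta, hcond]
  have h1 : ∀ j ∈ Finset.Icc 1 J, cycDelta n m (k + (j : ZMod n))
      = if j = n - v then (1 : ℝ) else 0 := by
    intro j hj
    simp only [Finset.mem_Icc] at hj
    have hcond : (k + (j : ZMod n) = m) ↔ j = n - v := by
      constructor
      · intro h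
        have hxneg : -x = (j : ZMod n) := by rw [hx]; linear_combination -h
        have hval := congrArg ZMod.val hxneg
        rw [ZMod.neg_val, ZMod.val_natCast, Nat.mod_eq_of_lt (by omega)] at hval
        split_ifs at hval with h0
        · omega
        · omega
      · intro h
        have hx0 : x ≠ 0 := by
          intro h0
          have : v = 0 := by rw [hv, h0, ZMod.val_zero]
          omega
        have hval : (-x).val = j := by
          rw [ZMod.neg_val, if_neg hx0]
          omega
        have hxj : -x = (j : ZMod n) := by
          rw [← hval, ZMod.natCast_zmod_val]
        linear_combination -hxj - hx
    simp only [cycDelta, hcond]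
  have h2 : ∀ j ∈ Finset.Icc 1 J, cycDelta n m (k - (j : ZMod n))
      = if j = v then (1 : ℝ) else 0 := by
    intro j hj
    simp only [Finset.mem_Icc] at hj
    have hcond : (k - (j : ZMod n) = m) ↔ j = v := by
      constructor
      · intro h
        have hxj : x = (j : ZMod n) := by rw [hx]; linear_combination h
        have hval := congrArg ZMod.val hxj
        rw [ZMod.val_natCast, Nat.mod_eq_of_lt (by omega)] at hval
        omega
      · intro h
        have hxj : x = (j : ZMod n) := by
          rw [h, hv, ZMod.natCast_zmod_val]
        linear_combination hxj - hx
    simp only [cycDelta, hcond]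
  rw [Finset.sum_congr rfl h1, Finset.sum_congr rfl h2, hδk,
    Finset.sum_ite_eq' (Finset.Icc 1 J) (n - v) (fun _ => (1:ℝ)),
    Finset.sum_ite_eq' (Finset.Icc 1 J) v (fun _ => (1:ℝ))]
  simp only [cycNorm, ← hv, Finset.mem_Icc, min_le_iff]
  split_ifs <;> (try norm_num) <;> omega

/-- `ν` solves the discrete Poisson equation `ν_m^{(k+1)} − 2ν_m^{(k)} + ν_m^{(k−1)} = δ̂_m^{(k)}`. -/
theorem nu_discrete_poisson (n N : ℕ) [NeZero n] (hodd : Odd N) (h1 : 1 ≤ N) (hNn : N < n) :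
    ∀ m k : ZMod n,
      nuFun n N m (k + 1) - 2 * nuFun n N m k + nuFun n N m (k - 1) = deltaHat n N m k := by
  intro m k
  obtain ⟨t, ht⟩ := hodd
  set J := (N - 1) / 2 with hJ
  have hn : 2 * J + 1 < n := by omega
  have hNJ : N = 2 * J + 1 := by omega
  have expand : nuFun n N m (k + 1) - 2 * nuFun n N m k + nuFun n N m (k - 1)
      = -(1 / (N : ℝ)) * ∑ j ∈ Finset.Icc 1 J,
          ((∑ l ∈ Finset.Icc 1 j, ∑ i ∈ Finset.Icc 1 j,
              cycDelta n m (k + 1 - (l : ZMod n) + (i : ZMod n)))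
            - 2 * (∑ l ∈ Finset.Icc 1 j, ∑ i ∈ Finset.Icc 1 j,
              cycDelta n m (k - (l : ZMod n) + (i : ZMod n)))
            + ∑ l ∈ Finset.Icc 1 j, ∑ i ∈ Finset.Icc 1 j,
              cycDelta n m (k - 1 - (l : ZMod n) + (i : ZMod n))) := by
    simp only [nuFun, ← hJ, Finset.sum_add_distrib, Finset.sum_sub_distrib, ← Finset.mul_sum]
    ring
  rw [expand, Finset.sum_congr rfl fun j _ => key1 n m k j,
    Finset.sum_sub_distrib, Finset.sum_add_distrib, Finset.sum_const, Nat.card_Icc]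
  simp only [Nat.add_sub_cancel, nsmul_eq_mul]
  rw [deltaHat]
  rw [show (N - 1) / 2 = J from rfl]
  rw [indicator_eq n J hn m k]
  have hNr : (N : ℝ) = 2 * (J : ℝ) + 1 := by exact_mod_cast hNJ
  have hJ0 : (2 * (J : ℝ) + 1) ≠ 0 := by positivity
  rw [hNr]
  field_simp
  ring
end

section
/- For every k ∈ ℤ/nℤ, Σ_{m∈ℤ/nℤ} |ν_m^{(k+1)} − ν_m^{(k)}| ≤ (N² − 1)/(4N). -/
lemma sum_cycDelta (n : ℕ) [NeZero n] (x : ZMod n) :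
    ∑ m : ZMod n, cycDelta n m x = 1 := by
  simp [cycDelta]

lemma telescope (n : ℕ) (m k : ZMod n) (l j : ℕ) (hj : 1 ≤ j) :
    ∑ i ∈ Finset.Icc 1 j, cycDelta n m (k + 1 - (l : ZMod n) + (i : ZMod n))
      - ∑ i ∈ Finset.Icc 1 j, cycDelta n m (k - (l : ZMod n) + (i : ZMod n))
    = cycDelta n m (k - (l : ZMod n) + ((j + 1 : ℕ) : ZMod n))
      - cycDelta n m (k - (l : ZMod n) + ((1 : ℕ) : ZMod n)) := by
  set g : ℕ → ℝ := fun i => cycDelta n m (k - (l : ZMod n) + (i : ZMod n)) with hg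
  have h1 : ∑ i ∈ Finset.Icc 1 j, cycDelta n m (k + 1 - (l : ZMod n) + (i : ZMod n))
      = ∑ i ∈ Finset.Icc 1 j, g (i + 1) := by
    apply Finset.sum_congr rfl
    intro i _
    simp only [hg]
    congr 1
    push_cast
    ring
  have h2 : ∑ i ∈ Finset.Icc 1 j, g (i + 1) = ∑ i ∈ Finset.Icc 2 (j + 1), g i := by
    rw [show Finset.Icc 2 (j + 1) = Finset.image (· + 1) (Finset.Icc 1 j) by
      ext x; simp only [Finset.mem_image, Finset.mem_Icc]; constructor
      · intro hx; exact ⟨x - 1, by omega, by omega⟩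
      · rintro ⟨y, hy, rfl⟩; omega]
    rw [Finset.sum_image (by intro a _ b _ h; simp only at h; omega)]
  have hA : Finset.Icc 1 (j + 1) = insert (j + 1) (Finset.Icc 1 j) := by
    ext x; simp only [Finset.mem_insert, Finset.mem_Icc]; omega
  have hB : Finset.Icc 1 (j + 1) = insert 1 (Finset.Icc 2 (j + 1)) := by
    ext x; simp only [Finset.mem_insert, Finset.mem_Icc]; omega
  have hAn : (j + 1) ∉ Finset.Icc 1 j := by simp
  have hBn : (1 : ℕ) ∉ Finset.Icc 2 (j + 1) := by simp
  have hAe : ∑ i ∈ Finset.Icc 1 (j + 1), g i = g (j + 1) + ∑ i ∈ Finset.Icc 1 j, g i := by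
    rw [hA, Finset.sum_insert hAn]
  have hBe : ∑ i ∈ Finset.Icc 1 (j + 1), g i = g 1 + ∑ i ∈ Finset.Icc 2 (j + 1), g i := by
    rw [hB, Finset.sum_insert hBn]
  rw [h1, h2]
  have := hAe.symm.trans hBe
  simp only [hg] at this ⊢
  linarith

/-- `Σ_m |ν_m^{(k+1)} − ν_m^{(k)}| ≤ (N² − 1)/(4N)` for every `k`. -/
theorem nu_difference_l1_bound (n N : ℕ) [NeZero n] (hodd : Odd N) (h1 : 1 ≤ N) (hNn : N < n) :
    ∀ k : ZMod n, ∑ m : ZMod n, |nuFun n N m (k + 1) - nuFun n N m k| ≤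
      ((N : ℝ) ^ 2 - 1) / (4 * N) := by
  intro k
  obtain ⟨J, hJ⟩ := hodd
  subst hJ
  have hJeq : (2 * J + 1 - 1) / 2 = J := by omega
  set N : ℕ := 2 * J + 1 with hNdef
  have hNpos : (0 : ℝ) < (N : ℝ) := by positivity
  have key : ∀ m : ZMod n, nuFun n N m (k + 1) - nuFun n N m k =
      -(1 / (N : ℝ)) * ∑ j ∈ Finset.Icc 1 J, ∑ l ∈ Finset.Icc 1 j,
        (cycDelta n m (k - (l : ZMod n) + ((j + 1 : ℕ) : ZMod n))
          - cycDelta n m (k - (l : ZMod n) + ((1 : ℕ) : ZMod n))) := by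
    intro m
    unfold nuFun
    rw [hJeq, ← mul_sub, ← Finset.sum_sub_distrib]
    congr 1
    apply Finset.sum_congr rfl
    intro j hj
    rw [← Finset.sum_sub_distrib]
    apply Finset.sum_congr rfl
    intro l hl
    exact telescope n m k l j (Finset.mem_Icc.mp hj).1
  calc ∑ m : ZMod n, |nuFun n N m (k + 1) - nuFun n N m k|
      ≤ ∑ m : ZMod n, (1 / (N : ℝ)) * ∑ j ∈ Finset.Icc 1 J, ∑ l ∈ Finset.Icc 1 j,
          (|cycDelta n m (k - (l : ZMod n) + ((j + 1 : ℕ) : ZMod n))|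
            + |cycDelta n m (k - (l : ZMod n) + ((1 : ℕ) : ZMod n))|) := by
        apply Finset.sum_le_sum
        intro m _
        rw [key m, abs_mul, abs_neg, abs_of_pos (by positivity)]
        apply mul_le_mul_of_nonneg_left _ (by positivity)
        refine (Finset.abs_sum_le_sum_abs _ _).trans (Finset.sum_le_sum fun j _ => ?_)
        refine (Finset.abs_sum_le_sum_abs _ _).trans (Finset.sum_le_sum fun l _ => ?_)
        exact abs_sub _ _
    _ = (1 / (N : ℝ)) * ∑ j ∈ Finset.Icc 1 J, ∑ l ∈ Finset.Icc 1 j, ∑ m : ZMod n,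
          (|cycDelta n m (k - (l : ZMod n) + ((j + 1 : ℕ) : ZMod n))|
            + |cycDelta n m (k - (l : ZMod n) + ((1 : ℕ) : ZMod n))|) := by
        rw [← Finset.mul_sum]
        congr 1
        rw [Finset.sum_comm]
        apply Finset.sum_congr rfl
        intro j _
        rw [Finset.sum_comm]
    _ = (1 / (N : ℝ)) * ∑ j ∈ Finset.Icc 1 J, ∑ l ∈ Finset.Icc 1 j, (2 : ℝ) := by
        congr 1
        apply Finset.sum_congr rfl; intro j _
        apply Finset.sum_congr rfl; intro l _
        rw [Finset.sum_add_distrib]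
        have habs : ∀ x : ZMod n, ∑ m : ZMod n, |cycDelta n m x| = 1 := by
          intro x
          rw [show (fun m => |cycDelta n m x|) = fun m => cycDelta n m x by
            funext m; rw [abs_of_nonneg]; unfold cycDelta; positivity]
          exact sum_cycDelta n x
        rw [habs, habs]; norm_num
    _ = (1 / (N : ℝ)) * ((J : ℝ) * (J + 1)) := by
        congr 1
        have hG : ∀ M : ℕ, ∑ j ∈ Finset.Icc 1 M, (j : ℝ) = M * (M + 1) / 2 := by
          intro M
          induction M with
          | zero => simp
          | succ m ih =>
            rw [Finset.sum_Icc_succ_top (by omega), ih]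
            push_cast; ring
        have hstep : ∀ j ∈ Finset.Icc 1 J, ∑ l ∈ Finset.Icc 1 j, (2 : ℝ) = 2 * (j : ℝ) := by
          intro j _
          rw [Finset.sum_const, Nat.card_Icc, Nat.add_sub_cancel, nsmul_eq_mul]
          ring
        rw [Finset.sum_congr rfl hstep, ← Finset.mul_sum, hG J]
        ring
    _ ≤ ((N : ℝ) ^ 2 - 1) / (4 * N) := by
        apply le_of_eq
        have : (N : ℝ) = 2 * J + 1 := by rw [hNdef]; push_cast; ring
        rw [this]
        field_simp
        ring
end

section
/- For all m, k ∈ ℤ/nℤ, |ν_m^{(k)}| ≤ (N² − 1)/(8N). -/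
lemma gauss_icc (r : ℕ) : (∑ j ∈ Finset.Icc 1 r, j) * 2 = r * (r + 1) := by
  induction r with
  | zero => simp
  | succ p ih =>
    rw [Finset.sum_Icc_succ_top (by omega : 1 ≤ p + 1), add_mul, ih]
    ring

/-- `|ν_m^{(k)}| ≤ (N² − 1)/(8N)` for all `m, k`. -/
theorem nu_sup_bound (n N : ℕ) [NeZero n] (hodd : Odd N) (h1 : 1 ≤ N) (hNn : N < n) :
    ∀ m k : ZMod n, |nuFun n N m k| ≤ ((N : ℝ) ^ 2 - 1) / (8 * N) := by
  intro m k
  obtain ⟨r, hr⟩ := hodd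
  have hM : (N - 1) / 2 = r := by omega
  set S := ∑ j ∈ Finset.Icc 1 ((N - 1) / 2), ∑ l ∈ Finset.Icc 1 j,
      ∑ i ∈ Finset.Icc 1 j, cycDelta n m (k - (l : ZMod n) + (i : ZMod n)) with hS
  have hdelta_nonneg : ∀ a b : ZMod n, 0 ≤ cycDelta n a b := by
    intro a b; unfold cycDelta; positivity
  have hSnonneg : 0 ≤ S := by
    apply Finset.sum_nonneg; intro j _
    apply Finset.sum_nonneg; intro l _
    apply Finset.sum_nonneg; intro i _
    exact hdelta_nonneg _ _
  -- inner sum bound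
  have hinner : ∀ j ∈ Finset.Icc 1 ((N - 1) / 2), ∀ l : ℕ,
      ∑ i ∈ Finset.Icc 1 j, cycDelta n m (k - (l : ZMod n) + (i : ZMod n)) ≤ 1 := by
    intro j hj l
    have hjle : j ≤ (N - 1) / 2 := (Finset.mem_Icc.mp hj).2
    have hjn : j < n := by omega
    unfold cycDelta
    rw [Finset.sum_boole]
    rw [Nat.cast_le_one]
    apply Finset.card_le_one.mpr
    intro a ha b hb
    simp only [Finset.mem_filter, Finset.mem_Icc] at ha hb
    have h1 : (a : ZMod n) = (b : ZMod n) := by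
      have := ha.2.trans hb.2.symm
      have h2 : k - (l : ZMod n) + (a : ZMod n) = k - (l : ZMod n) + (b : ZMod n) := this
      exact add_left_cancel h2
    have han : a < n := by omega
    have hbn : b < n := by omega
    have := (ZMod.natCast_eq_natCast_iff' a b n).mp h1
    rwa [Nat.mod_eq_of_lt han, Nat.mod_eq_of_lt hbn] at this
  have hSle : S ≤ (r : ℝ) * (r + 1) / 2 := by
    have step1 : S ≤ ∑ j ∈ Finset.Icc 1 ((N - 1) / 2), (j : ℝ) := by
      apply Finset.sum_le_sum
      intro j hj
      calc ∑ l ∈ Finset.Icc 1 j, ∑ i ∈ Finset.Icc 1 j,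
            cycDelta n m (k - (l : ZMod n) + (i : ZMod n))
          ≤ ∑ l ∈ Finset.Icc 1 j, (1 : ℝ) :=
            Finset.sum_le_sum fun l _ => hinner j hj l
        _ = (j : ℝ) := by simp
    refine step1.trans ?_
    rw [hM]
    have hcast := congrArg (Nat.cast : ℕ → ℝ) (gauss_icc r)
    push_cast at hcast
    linarith
  have hNpos : (0 : ℝ) < N := by positivity
  have habs : |nuFun n N m k| = (1 / (N : ℝ)) * S := by
    unfold nuFun
    rw [← hS, abs_mul, abs_neg, abs_of_nonneg (by positivity : (0:ℝ) ≤ 1 / (N : ℝ)),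
      abs_of_nonneg hSnonneg]
  rw [habs]
  have hNr : (N : ℝ) = 2 * r + 1 := by exact_mod_cast congrArg (Nat.cast : ℕ → ℝ) hr
  have h2 : (1 / (N : ℝ)) * S ≤ (1 / (N : ℝ)) * ((r : ℝ) * (r + 1) / 2) := by
    apply mul_le_mul_of_nonneg_left hSle (by positivity)
  refine h2.trans ?_
  rw [hNr]
  have hrpos : (0 : ℝ) < 2 * (r : ℝ) + 1 := by positivity
  apply le_of_eq
  field_simp
  ring
end

section
/- For every function Z : ℤ/nℤ → {0,1}, the corrector χ^{(k)} := −Σ_{m∈ℤ/nℤ} Z^{(m)} ν_m^{(k)} satisfies: (i) χ^{(k+1)} − 2χ^{(k)} + χ^{(k−1)} = Z̄^{(k)} − Z^{(k)} for every k ∈ ℤ/nℤ, where Z̄^{(k)} := (1/N) Σ_{j=−(N−1)/2}^{(N−1)/2} Z^{(k+j)}; (ii) max_{k∈ℤ/nℤ} |χ^{(k)}| ≤ (N² − 1)/24; and (iii) max_{k∈ℤ/nℤ} |χ^{(k+1)} − χ^{(k)}| ≤ (N² − 1)/(4N). -/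
/-- The corrector `χ^{(k)} := −Σ_m Z^{(m)} ν_m^{(k)}`. -/
noncomputable def chiOf (n N : ℕ) [NeZero n] (Z : ZMod n → ℝ) (k : ZMod n) : ℝ :=
  -∑ m : ZMod n, Z m * nuFun n N m k

/-- The local average `Z̄^{(k)} := (1/N) Σ_{j=−(N−1)/2}^{(N−1)/2} Z^{(k+j)}`. -/
noncomputable def localAvgOf (n N : ℕ) (Z : ZMod n → ℝ) (k : ZMod n) : ℝ :=
  (1 / (N : ℝ)) * ∑ j ∈ Finset.Icc (-(((N - 1) / 2 : ℕ) : ℤ)) (((N - 1) / 2 : ℕ) : ℤ),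
      Z (k + (j : ZMod n))

/- ===== auxiliary lemmas ===== -/

/-- Telescoping sum over `Icc 1 j`, increasing form. -/
lemma cyc_tele (n : ℕ) (f : ZMod n → ℝ) (c : ZMod n) (j : ℕ) :
    ∑ i ∈ Finset.Icc 1 j, (f (c + (i:ZMod n) + 1) - f (c + (i:ZMod n)))
      = f (c + (j:ZMod n) + 1) - f (c + 1) := by
  rw [← Finset.Ico_add_one_right_eq_Icc, Finset.sum_Ico_eq_sum_range]
  have h := Finset.sum_range_sub (fun i : ℕ => f (c + (i:ZMod n) + 1)) j
  simp only [Nat.cast_zero, add_zero] at h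
  rw [show j + 1 - 1 = j from rfl, ← h]
  apply Finset.sum_congr rfl
  intro i _
  push_cast
  ring_nf

/-- Telescoping sum over `Icc 1 j`, decreasing form. -/
lemma cyc_tele' (n : ℕ) (f : ZMod n → ℝ) (c : ZMod n) (j : ℕ) :
    ∑ i ∈ Finset.Icc 1 j, (f (c - (i:ZMod n)) - f (c - (i:ZMod n) - 1))
      = f (c - 1) - f (c - (j:ZMod n) - 1) := by
  rw [← Finset.Ico_add_one_right_eq_Icc, Finset.sum_Ico_eq_sum_range]
  have h := Finset.sum_range_sub' (fun i : ℕ => f (c - (i:ZMod n) - 1)) j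
  simp only [Nat.cast_zero, sub_zero] at h
  rw [show j + 1 - 1 = j from rfl, ← h]
  apply Finset.sum_congr rfl
  intro i _
  push_cast
  ring_nf

lemma sum_sq_Icc (M : ℕ) :
    ∑ j ∈ Finset.Icc 1 M, (j:ℝ)^2 = M*(M+1)*(2*M+1)/6 := by
  induction M with
  | zero => simp
  | succ m ih =>
      rw [Finset.sum_Icc_succ_top (by omega), ih]
      push_cast; ring

lemma sum_id_Icc (M : ℕ) :
    ∑ j ∈ Finset.Icc 1 M, (j:ℝ) = M*(M+1)/2 := by
  induction M with
  | zero => simp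
  | succ m ih =>
      rw [Finset.sum_Icc_succ_top (by omega), ih]
      push_cast; ring

lemma sum_Icc_int_symm (g : ℤ → ℝ) (M : ℕ) :
    ∑ j ∈ Finset.Icc (-(M:ℤ)) (M:ℤ), g j
      = g 0 + ∑ j ∈ Finset.Icc 1 M, (g (j:ℤ) + g (-(j:ℤ))) := by
  induction M with
  | zero => simp
  | succ m ih =>
      have h1 : Finset.Icc (-((m:ℤ)+1)) ((m:ℤ)+1)
          = insert (-((m:ℤ)+1)) (insert ((m:ℤ)+1) (Finset.Icc (-(m:ℤ)) (m:ℤ))) := by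
        ext x
        simp only [Finset.mem_Icc, Finset.mem_insert]
        omega
      push_cast
      rw [h1, Finset.sum_insert (by simp only [Finset.mem_insert, Finset.mem_Icc]; omega),
        Finset.sum_insert (by simp only [Finset.mem_Icc]; omega), ih,
        Finset.sum_Icc_succ_top (show 1 ≤ m + 1 by omega)]
      push_cast
      ring

/-- `χ` as an explicit triple sum of values of `Z`. -/
lemma chi_eq (n N : ℕ) [NeZero n] (Z : ZMod n → ℝ) (k : ZMod n) :
    chiOf n N Z k = (1 / (N:ℝ)) * ∑ j ∈ Finset.Icc 1 ((N - 1) / 2), ∑ l ∈ Finset.Icc 1 j,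
      ∑ i ∈ Finset.Icc 1 j, Z (k - (l : ZMod n) + (i : ZMod n)) := by
  have hd : ∀ x : ZMod n, ∑ m : ZMod n, Z m * cycDelta n m x = Z x := by
    intro x
    simp [cycDelta, mul_ite]
  simp only [chiOf, nuFun, neg_mul, mul_neg, Finset.sum_neg_distrib, neg_neg, Finset.mul_sum]
  rw [Finset.sum_comm]
  apply Finset.sum_congr rfl
  intro j _
  rw [Finset.sum_comm]
  apply Finset.sum_congr rfl
  intro l _
  rw [Finset.sum_comm]
  apply Finset.sum_congr rfl
  intro i _
  rw [← hd (k - l + i), Finset.mul_sum]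
  apply Finset.sum_congr rfl
  intro m _
  ring

/-- For `{0,1}`-valued `Z`, the corrector `χ` solves the discrete Poisson equation
`Δχ = Z̄ − Z` and satisfies `max_k |χ^{(k)}| ≤ (N²−1)/24` and
`max_k |χ^{(k+1)} − χ^{(k)}| ≤ (N²−1)/(4N)`. -/
theorem chi_properties (n N : ℕ) [NeZero n] (hodd : Odd N) (h1 : 1 ≤ N) (hNn : N < n) :
    ∀ Z : ZMod n → ℝ, (∀ m, Z m = 0 ∨ Z m = 1) →
      (∀ k : ZMod n, chiOf n N Z (k + 1) - 2 * chiOf n N Z k + chiOf n N Z (k - 1) =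
          localAvgOf n N Z k - Z k) ∧
      (∀ k : ZMod n, |chiOf n N Z k| ≤ ((N : ℝ) ^ 2 - 1) / 24) ∧
      (∀ k : ZMod n, |chiOf n N Z (k + 1) - chiOf n N Z k| ≤ ((N : ℝ) ^ 2 - 1) / (4 * N)) := by
  intro Z hZ
  obtain ⟨M, hN⟩ : ∃ M, N = 2 * M + 1 := hodd
  have hM : (N - 1) / 2 = M := by omega
  have hNpos : (0:ℝ) < (N:ℝ) := by
    have : 0 < N := h1
    exact_mod_cast this
  have hNne : (N:ℝ) ≠ 0 := ne_of_gt hNpos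
  have hZ0 : ∀ x, 0 ≤ Z x := by intro x; rcases hZ x with h | h <;> rw [h] <;> norm_num
  have hZ1 : ∀ x, Z x ≤ 1 := by intro x; rcases hZ x with h | h <;> rw [h] <;> norm_num
  -- χ as explicit sum
  have hchi : ∀ k : ZMod n, chiOf n N Z k
      = (1 / (N:ℝ)) * ∑ j ∈ Finset.Icc 1 M, ∑ l ∈ Finset.Icc 1 j,
          ∑ i ∈ Finset.Icc 1 j, Z (k - (l : ZMod n) + (i : ZMod n)) := by
    intro k; rw [chi_eq, hM]
  -- first difference of the inner double sums
  have hdiff : ∀ (j : ℕ) (k : ZMod n),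
      (∑ l ∈ Finset.Icc 1 j, ∑ i ∈ Finset.Icc 1 j, Z (k + 1 - (l:ZMod n) + (i:ZMod n)))
        - ∑ l ∈ Finset.Icc 1 j, ∑ i ∈ Finset.Icc 1 j, Z (k - (l:ZMod n) + (i:ZMod n))
      = ∑ l ∈ Finset.Icc 1 j, (Z (k - (l:ZMod n) + (j:ZMod n) + 1) - Z (k - (l:ZMod n) + 1)) := by
    intro j k
    rw [← Finset.sum_sub_distrib]
    apply Finset.sum_congr rfl
    intro l _
    rw [← Finset.sum_sub_distrib, ← cyc_tele n Z (k - (l:ZMod n)) j]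
    apply Finset.sum_congr rfl
    intro i _
    congr 2
    ring
  -- second difference of the inner double sums
  have hsec : ∀ (j : ℕ) (k : ZMod n),
      (∑ l ∈ Finset.Icc 1 j, (Z (k - (l:ZMod n) + (j:ZMod n) + 1) - Z (k - (l:ZMod n) + 1)))
        - ∑ l ∈ Finset.Icc 1 j, (Z (k - 1 - (l:ZMod n) + (j:ZMod n) + 1) - Z (k - 1 - (l:ZMod n) + 1))
      = Z (k + (j:ZMod n)) + Z (k - (j:ZMod n)) - 2 * Z k := by
    intro j k
    rw [← Finset.sum_sub_distrib]
    have h3 := cyc_tele' n (fun x => Z (x + (j:ZMod n) + 1) - Z (x + 1)) k j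
    rw [show (∑ l ∈ Finset.Icc 1 j,
        ((Z (k - (l:ZMod n) + (j:ZMod n) + 1) - Z (k - (l:ZMod n) + 1))
          - (Z (k - 1 - (l:ZMod n) + (j:ZMod n) + 1) - Z (k - 1 - (l:ZMod n) + 1))))
      = ∑ l ∈ Finset.Icc 1 j,
        ((Z (k - (l:ZMod n) + (j:ZMod n) + 1) - Z (k - (l:ZMod n) + 1))
          - (Z (k - (l:ZMod n) - 1 + (j:ZMod n) + 1) - Z (k - (l:ZMod n) - 1 + 1)))
      from by apply Finset.sum_congr rfl; intro l _; congr 3 <;> ring]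
    rw [h3]
    have e1 : k - 1 + (j:ZMod n) + 1 = k + (j:ZMod n) := by ring
    have e2 : k - 1 + 1 = k := by ring
    have e3 : k - (j:ZMod n) - 1 + (j:ZMod n) + 1 = k := by ring
    have e4 : k - (j:ZMod n) - 1 + 1 = k - (j:ZMod n) := by ring
    rw [e1, e2, e3, e4]
    ring
  refine ⟨?_, ?_, ?_⟩
  · -- Poisson equation
    intro k
    have hA : ∀ k' : ZMod n, chiOf n N Z (k' + 1) - chiOf n N Z k'
        = (1 / (N:ℝ)) * ∑ j ∈ Finset.Icc 1 M, ∑ l ∈ Finset.Icc 1 j,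
            (Z (k' - (l:ZMod n) + (j:ZMod n) + 1) - Z (k' - (l:ZMod n) + 1)) := by
      intro k'
      rw [hchi, hchi, ← mul_sub, ← Finset.sum_sub_distrib]
      congr 1
      apply Finset.sum_congr rfl
      intro j _
      exact hdiff j k'
    have hkey : chiOf n N Z (k + 1) - 2 * chiOf n N Z k + chiOf n N Z (k - 1)
        = (1 / (N:ℝ)) * ∑ j ∈ Finset.Icc 1 M,
            (Z (k + (j:ZMod n)) + Z (k - (j:ZMod n)) - 2 * Z k) := by
      have h₁ := hA k
      have h₂ := hA (k - 1)
      rw [show k - 1 + 1 = k by ring] at h₂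
      have : chiOf n N Z (k + 1) - 2 * chiOf n N Z k + chiOf n N Z (k - 1)
          = (chiOf n N Z (k + 1) - chiOf n N Z k) - (chiOf n N Z k - chiOf n N Z (k - 1)) := by ring
      rw [this, h₁, h₂, ← mul_sub, ← Finset.sum_sub_distrib]
      congr 1
      apply Finset.sum_congr rfl
      intro j _
      exact hsec j k
    rw [hkey]
    -- now compute the RHS
    unfold localAvgOf
    rw [hM, sum_Icc_int_symm (fun j : ℤ => Z (k + (j:ZMod n))) M]
    simp only [Int.cast_zero, add_zero, Int.cast_natCast, Int.cast_neg]
    have hrw : ∀ j : ℕ, Z (k + (-(j:ZMod n))) = Z (k - (j:ZMod n)) := by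
      intro j; congr 1; ring
    simp only [hrw]
    rw [Finset.sum_sub_distrib, Finset.sum_const, Nat.card_Icc]
    simp only [nsmul_eq_mul]
    have hcard : (M + 1 - 1 : ℕ) = M := by omega
    rw [hcard]
    have hNcast : (N:ℝ) = 2 * (M:ℝ) + 1 := by rw [hN]; push_cast; ring
    rw [hNcast]
    field_simp
    ring
  · -- sup bound
    intro k
    have h0 : 0 ≤ chiOf n N Z k := by
      rw [hchi]
      apply mul_nonneg (by positivity)
      apply Finset.sum_nonneg; intro j _
      apply Finset.sum_nonneg; intro l _
      apply Finset.sum_nonneg; intro i _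
      exact hZ0 _
    rw [abs_of_nonneg h0, hchi]
    have hle : (∑ j ∈ Finset.Icc 1 M, ∑ l ∈ Finset.Icc 1 j,
        ∑ i ∈ Finset.Icc 1 j, Z (k - (l:ZMod n) + (i:ZMod n))) ≤ ∑ j ∈ Finset.Icc 1 M, (j:ℝ)^2 := by
      apply Finset.sum_le_sum
      intro j _
      calc (∑ l ∈ Finset.Icc 1 j, ∑ i ∈ Finset.Icc 1 j, Z (k - (l:ZMod n) + (i:ZMod n)))
          ≤ ∑ l ∈ Finset.Icc 1 j, ∑ i ∈ Finset.Icc 1 j, (1:ℝ) := by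
            apply Finset.sum_le_sum; intro l _
            apply Finset.sum_le_sum; intro i _
            exact hZ1 _
        _ = (j:ℝ)^2 := by
            simp [Finset.sum_const, Nat.card_Icc]
            ring
    have hNcast : (N:ℝ) = 2 * (M:ℝ) + 1 := by rw [hN]; push_cast; ring
    calc (1 / (N:ℝ)) * ∑ j ∈ Finset.Icc 1 M, ∑ l ∈ Finset.Icc 1 j,
          ∑ i ∈ Finset.Icc 1 j, Z (k - (l:ZMod n) + (i:ZMod n))
        ≤ (1 / (N:ℝ)) * ∑ j ∈ Finset.Icc 1 M, (j:ℝ)^2 := by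
          apply mul_le_mul_of_nonneg_left hle (by positivity)
      _ = ((N:ℝ)^2 - 1) / 24 := by
          rw [sum_sq_Icc, hNcast]
          field_simp
          ring
  · -- gradient bound
    intro k
    have hA : chiOf n N Z (k + 1) - chiOf n N Z k
        = (1 / (N:ℝ)) * ∑ j ∈ Finset.Icc 1 M, ∑ l ∈ Finset.Icc 1 j,
            (Z (k - (l:ZMod n) + (j:ZMod n) + 1) - Z (k - (l:ZMod n) + 1)) := by
      rw [hchi, hchi, ← mul_sub, ← Finset.sum_sub_distrib]
      congr 1
      apply Finset.sum_congr rfl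
      intro j _
      exact hdiff j k
    rw [hA, abs_mul]
    have habs1 : |1 / (N:ℝ)| = 1 / (N:ℝ) := abs_of_pos (by positivity)
    rw [habs1]
    have hle : |∑ j ∈ Finset.Icc 1 M, ∑ l ∈ Finset.Icc 1 j,
        (Z (k - (l:ZMod n) + (j:ZMod n) + 1) - Z (k - (l:ZMod n) + 1))| ≤ ∑ j ∈ Finset.Icc 1 M, (j:ℝ) := by
      calc |∑ j ∈ Finset.Icc 1 M, ∑ l ∈ Finset.Icc 1 j,
          (Z (k - (l:ZMod n) + (j:ZMod n) + 1) - Z (k - (l:ZMod n) + 1))|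
          ≤ ∑ j ∈ Finset.Icc 1 M, |∑ l ∈ Finset.Icc 1 j,
            (Z (k - (l:ZMod n) + (j:ZMod n) + 1) - Z (k - (l:ZMod n) + 1))| :=
            Finset.abs_sum_le_sum_abs _ _
        _ ≤ ∑ j ∈ Finset.Icc 1 M, (j:ℝ) := by
            apply Finset.sum_le_sum
            intro j _
            calc |∑ l ∈ Finset.Icc 1 j,
                (Z (k - (l:ZMod n) + (j:ZMod n) + 1) - Z (k - (l:ZMod n) + 1))|
                ≤ ∑ l ∈ Finset.Icc 1 j, |Z (k - (l:ZMod n) + (j:ZMod n) + 1) - Z (k - (l:ZMod n) + 1)| :=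
                  Finset.abs_sum_le_sum_abs _ _
              _ ≤ ∑ l ∈ Finset.Icc 1 j, (1:ℝ) := by
                  apply Finset.sum_le_sum
                  intro l _
                  rw [abs_sub_le_iff]
                  constructor
                  · have := hZ1 (k - (l:ZMod n) + (j:ZMod n) + 1); have := hZ0 (k - (l:ZMod n) + 1); linarith
                  · have := hZ1 (k - (l:ZMod n) + 1); have := hZ0 (k - (l:ZMod n) + (j:ZMod n) + 1); linarith
              _ = (j:ℝ) := by simp [Nat.card_Icc]
    have hNcast : (N:ℝ) = 2 * (M:ℝ) + 1 := by rw [hN]; push_cast; ring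
    calc (1 / (N:ℝ)) * |∑ j ∈ Finset.Icc 1 M, ∑ l ∈ Finset.Icc 1 j,
          (Z (k - (l:ZMod n) + (j:ZMod n) + 1) - Z (k - (l:ZMod n) + 1))|
        ≤ (1 / (N:ℝ)) * ∑ j ∈ Finset.Icc 1 M, (j:ℝ) := by
          apply mul_le_mul_of_nonneg_left hle (by positivity)
      _ ≤ ((N:ℝ)^2 - 1) / (4 * N) := by
          rw [sum_id_Icc, hNcast]
          rw [one_div, inv_mul_eq_div, div_le_div_iff₀ (by positivity) (by positivity)]
          have hP : (0:ℝ) ≤ (M:ℝ) * ((M:ℝ) + 1) * (2*(M:ℝ)+1) := by positivity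
          nlinarith [hP]
end

section
/- If Z, Z' : ℤ/nℤ → {0,1} coincide at every site except exactly one site l ∈ ℤ/nℤ, then the corresponding correctors χ_Z^{(k)} := −Σ_{m∈ℤ/nℤ} Z^{(m)} ν_m^{(k)} and χ_{Z'}^{(k)} := −Σ_{m∈ℤ/nℤ} Z'^{(m)} ν_m^{(k)} satisfy max_{k∈ℤ/nℤ} |χ_Z^{(k)} − χ_{Z'}^{(k)}| ≤ (N² − 1)/(8N). -/
lemma cycDelta_nonneg (n : ℕ) (m k : ZMod n) : 0 ≤ cycDelta n m k := by
  unfold cycDelta; split <;> norm_num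

lemma inner_sum_le_one (n : ℕ) [NeZero n] (m c : ZMod n) (j : ℕ) (hj : j < n) :
    ∑ i ∈ Finset.Icc 1 j, cycDelta n m (c + (i : ZMod n)) ≤ 1 := by
  classical
  have hrw : ∀ i : ℕ, cycDelta n m (c + (i : ZMod n))
      = if (i : ZMod n) = m - c then (1:ℝ) else 0 := by
    intro i
    unfold cycDelta
    congr 1
    apply propext
    constructor
    · intro h; linear_combination h
    · intro h; linear_combination h
  simp only [hrw]
  rw [← Finset.sum_filter, Finset.sum_const, nsmul_eq_mul, mul_one]
  have hcard : ((Finset.Icc 1 j).filter (fun i : ℕ => (i : ZMod n) = m - c)).card ≤ 1 := by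
    apply Finset.card_le_one.mpr
    intro a ha b hb
    obtain ⟨ha1, ha2⟩ := Finset.mem_filter.mp ha
    obtain ⟨hb1, hb2⟩ := Finset.mem_filter.mp hb
    have han : a < n := lt_of_le_of_lt (Finset.mem_Icc.mp ha1).2 hj
    have hbn : b < n := lt_of_le_of_lt (Finset.mem_Icc.mp hb1).2 hj
    have : ((a : ZMod n)).val = ((b : ZMod n)).val := by rw [ha2, hb2]
    rwa [ZMod.val_cast_of_lt han, ZMod.val_cast_of_lt hbn] at this
  exact_mod_cast hcard

lemma sum_Icc_id_real (M : ℕ) : ∑ j ∈ Finset.Icc 1 M, (j : ℝ) = M * (M + 1) / 2 := by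
  induction M with
  | zero => simp
  | succ m ih =>
    rw [Finset.sum_Icc_succ_top (by omega)]
    push_cast
    rw [ih]
    ring

lemma nu_abs_le (n N : ℕ) [NeZero n] (hodd : Odd N) (h1 : 1 ≤ N) (hNn : N < n)
    (m k : ZMod n) : |nuFun n N m k| ≤ ((N : ℝ) ^ 2 - 1) / (8 * N) := by
  obtain ⟨M, hM⟩ := hodd
  have hM2 : (N - 1) / 2 = M := by omega
  set S : ℝ := ∑ j ∈ Finset.Icc 1 ((N - 1) / 2), ∑ l ∈ Finset.Icc 1 j,
      ∑ i ∈ Finset.Icc 1 j, cycDelta n m (k - (l : ZMod n) + (i : ZMod n)) with hSdef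
  have hS_nonneg : (0:ℝ) ≤ S := by
    refine Finset.sum_nonneg fun j _ => Finset.sum_nonneg fun l _ =>
      Finset.sum_nonneg fun i _ => cycDelta_nonneg n m _
  have hS_le : S ≤ M * (M + 1) / 2 := by
    rw [← sum_Icc_id_real M, hSdef, hM2]
    apply Finset.sum_le_sum
    intro j hj
    have hjM : j ≤ M := (Finset.mem_Icc.mp hj).2
    have hjn : j < n := by omega
    calc ∑ l ∈ Finset.Icc 1 j, ∑ i ∈ Finset.Icc 1 j,
          cycDelta n m (k - (l : ZMod n) + (i : ZMod n))
        ≤ ∑ l ∈ Finset.Icc 1 j, (1:ℝ) :=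
          Finset.sum_le_sum fun l _ => inner_sum_le_one n m (k - (l : ZMod n)) j hjn
      _ = (j : ℝ) := by simp [Nat.card_Icc]
  have hN0 : (N : ℝ) ≠ 0 := by positivity
  have habs : |nuFun n N m k| = (1 / (N : ℝ)) * S := by
    unfold nuFun
    rw [abs_mul, abs_neg, abs_of_nonneg hS_nonneg, abs_of_nonneg (by positivity)]
  rw [habs]
  have : ((N : ℝ) ^ 2 - 1) / (8 * N) = (1 / (N : ℝ)) * ((M : ℝ) * (M + 1) / 2) := by
    subst hM
    push_cast
    field_simp
    ring
  rw [this]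
  apply mul_le_mul_of_nonneg_left hS_le (by positivity)

/-- If two `{0,1}`-valued configurations `Z, Z'` coincide except at exactly one site `l`,
then `max_k |χ_Z^{(k)} − χ_{Z'}^{(k)}| ≤ (N² − 1)/(8N)`. -/
theorem chi_single_flip_bound (n N : ℕ) [NeZero n] (hodd : Odd N) (h1 : 1 ≤ N) (hNn : N < n)
    (Z Z' : ZMod n → ℝ) (hZ : ∀ m, Z m = 0 ∨ Z m = 1) (hZ' : ∀ m, Z' m = 0 ∨ Z' m = 1)
    (l : ZMod n) (hne : Z l ≠ Z' l) (hagree : ∀ m, m ≠ l → Z m = Z' m) :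
    ∀ k : ZMod n, |chiOf n N Z k - chiOf n N Z' k| ≤ ((N : ℝ) ^ 2 - 1) / (8 * N) := by
  intro k
  have hsum : (∑ m : ZMod n, Z m * nuFun n N m k) - (∑ m : ZMod n, Z' m * nuFun n N m k)
      = (Z l - Z' l) * nuFun n N l k := by
    rw [← Finset.sum_sub_distrib]
    rw [Finset.sum_eq_single l]
    · ring
    · intro m _ hm; rw [hagree m hm]; ring
    · intro h; exact absurd (Finset.mem_univ l) h
  have hdiff : chiOf n N Z k - chiOf n N Z' k = -((Z l - Z' l) * nuFun n N l k) := by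
    unfold chiOf
    rw [← hsum]; ring
  rw [hdiff, abs_neg, abs_mul]
  have h1' : |Z l - Z' l| = 1 := by
    rcases hZ l with h | h <;> rcases hZ' l with h' | h' <;>
      rw [h, h'] at hne ⊢ <;> simp_all
  rw [h1', one_mul]
  exact nu_abs_le n N hodd h1 hNn l k
end

section
/- For every t ∈ [0,∞) and every y ∈ ℝ with |y| ≤ 1: Σ_{k=0}^∞ (e^{−t} t^k / k!) · e^{y(k − t)} ≤ e^{e y² t / 2}. Equivalently, if X is a Poisson random variable with mean t, then E[exp(y(X − t))] ≤ exp(e y² t / 2) whenever |y| ≤ 1. -/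
/-- Moment generating function bound for a compensated Poisson random variable:
if `X` has the Poisson distribution with mean `t` (probability `e^{-t} t^k / k!` at `k`),
then `E[exp(y(X - t))] = Σ_{k} e^{-t} t^k / k! · e^{y(k-t)} ≤ e^{e y² t / 2}` for `|y| ≤ 1`. -/
theorem poisson_compensated_mgf_bound (t : ℝ) (ht : 0 ≤ t) (y : ℝ) (hy : |y| ≤ 1) :
    (∑' k : ℕ, Real.exp (-t) * t ^ k / (Nat.factorial k) * Real.exp (y * ((k : ℝ) - t)))
      ≤ Real.exp (Real.exp 1 * y ^ 2 * t / 2) := by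
  have hsum : (∑' k : ℕ, Real.exp (-t) * t ^ k / (Nat.factorial k) * Real.exp (y * ((k : ℝ) - t)))
      = Real.exp (t * (Real.exp y - 1 - y)) := by
    have h1 : (fun k : ℕ => Real.exp (-t) * t ^ k / (Nat.factorial k) * Real.exp (y * ((k : ℝ) - t)))
        = fun k : ℕ => Real.exp (-t - y * t) * ((t * Real.exp y) ^ k / (Nat.factorial k)) := by
      ext k
      rw [mul_pow, ← Real.exp_nat_mul]
      rw [show Real.exp (-t) * t ^ k / (Nat.factorial k) * Real.exp (y * ((k : ℝ) - t))
          = Real.exp (-t) * Real.exp (y * ((k : ℝ) - t)) * (t ^ k / (Nat.factorial k)) from by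
        ring]
      rw [show Real.exp (-t - y * t) * (t ^ k * Real.exp ((k : ℝ) * y) / (Nat.factorial k))
          = Real.exp (-t - y * t) * Real.exp ((k : ℝ) * y) * (t ^ k / (Nat.factorial k)) from by
        ring]
      rw [← Real.exp_add, ← Real.exp_add]
      congr 2
      ring
    rw [h1, tsum_mul_left]
    have h2 : HasSum (fun k : ℕ => (t * Real.exp y) ^ k / (Nat.factorial k))
        (Real.exp (t * Real.exp y)) := by
      have := NormedSpace.expSeries_div_hasSum_exp (t * Real.exp y)
      rwa [← Real.exp_eq_exp_ℝ] at this
    rw [h2.tsum_eq, ← Real.exp_add]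
    ring_nf
  rw [hsum]
  apply Real.exp_le_exp.mpr
  have hb : Real.exp y - 1 - y ≤ Real.exp 1 * y ^ 2 / 2 := by
    have h1 := Real.abs_exp_sub_one_sub_id_le hy
    have h2 : Real.exp y - 1 - y ≤ y ^ 2 := (abs_le.mp h1).2
    have h3 : y ^ 2 ≤ Real.exp 1 * y ^ 2 / 2 := by
      nlinarith [Real.add_one_le_exp (1 : ℝ), sq_nonneg y]
    linarith
  calc t * (Real.exp y - 1 - y) ≤ t * (Real.exp 1 * y ^ 2 / 2) :=
        mul_le_mul_of_nonneg_left hb ht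
    _ = Real.exp 1 * y ^ 2 * t / 2 := by ring
end

section
/- Let a, b : [0,∞) → [0,∞) be nonnegative locally integrable functions, let z₀ ∈ [0,1], and let z : [0,∞) → ℝ be a continuous function satisfying z(t) = z₀ + ∫₀ᵗ [ a(s)(1 − z(s)) − b(s) z(s) ] ds for all t ≥ 0. Then 0 ≤ z(t) ≤ 1 for all t ≥ 0. -/
open MeasureTheory

theorem gating_nonneg_aux (a b : ℝ → ℝ)
    (ha0 : ∀ t ∈ Set.Ici (0:ℝ), 0 ≤ a t) (hb0 : ∀ t ∈ Set.Ici (0:ℝ), 0 ≤ b t)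
    (haloc : LocallyIntegrableOn a (Set.Ici 0) volume)
    (hbloc : LocallyIntegrableOn b (Set.Ici 0) volume)
    (z₀ : ℝ) (hz₀ : 0 ≤ z₀)
    (z : ℝ → ℝ) (hz : Continuous z)
    (heq : ∀ t, 0 ≤ t → z t = z₀ + ∫ s in (0:ℝ)..t, (a s * (1 - z s) - b s * z s)) :
    ∀ t, 0 ≤ t → 0 ≤ z t := by
  intro t ht
  by_contra hneg
  push_neg at hneg
  set g : ℝ → ℝ := fun s => a s * (1 - z s) - b s * z s with hg
  have key : ∀ T : ℝ, 0 ≤ T → IntervalIntegrable g volume 0 T := by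
    intro T hT
    rw [intervalIntegrable_iff_integrableOn_Ioc_of_le hT]
    have hIcc : Set.Ioc (0:ℝ) T ⊆ Set.Icc 0 T := Set.Ioc_subset_Icc_self
    have ha_int : IntegrableOn a (Set.Icc 0 T) volume :=
      haloc.integrableOn_compact_subset Set.Icc_subset_Ici_self isCompact_Icc
    have hb_int : IntegrableOn b (Set.Icc 0 T) volume :=
      hbloc.integrableOn_compact_subset Set.Icc_subset_Ici_self isCompact_Icc
    obtain ⟨C, hC⟩ := (isCompact_Icc (a := (0:ℝ)) (b := T)).exists_bound_of_continuousOn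
      (hz.continuousOn (s := Set.Icc 0 T))
    have hmeas1 : AEStronglyMeasurable (fun s => 1 - z s)
        (volume.restrict (Set.Icc (0:ℝ) T)) :=
      (continuous_const.sub hz).aestronglyMeasurable
    have hmeas2 : AEStronglyMeasurable z (volume.restrict (Set.Icc (0:ℝ) T)) :=
      hz.aestronglyMeasurable
    have hbd1 : ∀ᵐ x ∂(volume.restrict (Set.Icc (0:ℝ) T)), ‖1 - z x‖ ≤ 1 + C := by
      filter_upwards [ae_restrict_mem measurableSet_Icc] with x hx
      have := hC x hx
      calc ‖1 - z x‖ ≤ ‖(1:ℝ)‖ + ‖z x‖ := norm_sub_le _ _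
        _ ≤ 1 + C := by simp only [norm_one]; linarith
    have hbd2 : ∀ᵐ x ∂(volume.restrict (Set.Icc (0:ℝ) T)), ‖z x‖ ≤ C := by
      filter_upwards [ae_restrict_mem measurableSet_Icc] with x hx
      exact hC x hx
    have h1 : IntegrableOn (fun s => (1 - z s) * a s) (Set.Icc 0 T) volume :=
      ha_int.bdd_mul hmeas1 hbd1
    have h2 : IntegrableOn (fun s => z s * b s) (Set.Icc 0 T) volume :=
      hb_int.bdd_mul hmeas2 hbd2
    have hgeq : g = (fun s => (1 - z s) * a s) - fun s => z s * b s := by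
      funext x; simp only [hg, Pi.sub_apply]; ring
    have : IntegrableOn g (Set.Icc 0 T) volume := by
      rw [hgeq]; exact h1.sub h2
    exact this.mono_set hIcc
  have hz0 : z 0 = z₀ := by simpa using heq 0 le_rfl
  set S : Set ℝ := Set.Icc 0 t ∩ {s | 0 ≤ z s} with hS
  have hSne : (0:ℝ) ∈ S := ⟨⟨le_rfl, ht⟩, by simp [hz0, hz₀]⟩
  have hSc : IsClosed S := isClosed_Icc.inter (isClosed_le continuous_const hz)
  have hSb : BddAbove S := (bddAbove_Icc (a := (0:ℝ)) (b := t)).mono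
    (Set.inter_subset_left)
  set t₁ : ℝ := sSup S with ht₁def
  have ht₁S : t₁ ∈ S := hSc.csSup_mem ⟨0, hSne⟩ hSb
  have ht₁0 : 0 ≤ t₁ := ht₁S.1.1
  have ht₁t : t₁ ≤ t := ht₁S.1.2
  have hzt₁ : 0 ≤ z t₁ := ht₁S.2
  have hng : ∀ s ∈ Set.Ioc t₁ t, z s ≤ 0 := by
    intro s hs
    by_contra hc
    push_neg at hc
    have hsS : s ∈ S := ⟨⟨le_trans ht₁0 hs.1.le, hs.2⟩, hc.le⟩
    exact absurd (le_csSup hSb hsS) (not_le.mpr hs.1)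
  have hdiff : z t - z t₁ = ∫ s in t₁..t, g s := by
    rw [heq t ht, heq t₁ ht₁0]
    have := intervalIntegral.integral_interval_sub_left (key t ht) (key t₁ ht₁0)
    linarith [this]
  have hge : 0 ≤ ∫ s in t₁..t, g s := by
    apply intervalIntegral.integral_nonneg_of_ae_restrict ht₁t
    have : ∀ᵐ x ∂(volume.restrict (Set.Icc t₁ t)), x ∈ Set.Icc t₁ t :=
      ae_restrict_mem measurableSet_Icc
    have hIoc : ∀ᵐ x ∂(volume.restrict (Set.Icc t₁ t)), x ≠ t₁ := by
      refine ae_restrict_of_ae ?_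
      rw [ae_iff]
      have : {x : ℝ | ¬x ≠ t₁} = {t₁} := by ext x; simp
      rw [this]
      exact Real.volume_singleton
    filter_upwards [this, hIoc] with x hx hxne
    have hx1 : t₁ < x := lt_of_le_of_ne hx.1 (Ne.symm hxne)
    have hzx : z x ≤ 0 := hng x ⟨hx1, hx.2⟩
    have hx0 : (0:ℝ) ≤ x := le_trans ht₁0 hx.1
    have h1 : 0 ≤ a x * (1 - z x) := mul_nonneg (ha0 x hx0) (by linarith)
    have h2 : b x * z x ≤ 0 := mul_nonpos_of_nonneg_of_nonpos (hb0 x hx0) hzx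
    simp only [hg, Pi.zero_apply]
    linarith
  linarith [hzt₁, hneg]

/-- Invariance of the unit interval for the gating equation
`z(t) = z₀ + ∫₀ᵗ [a(s)(1 - z(s)) - b(s) z(s)] ds` with nonnegative locally integrable
rates `a` (opening) and `b` (closing): if `z₀ ∈ [0,1]` then `z(t) ∈ [0,1]` for all `t ≥ 0`. -/
theorem gating_interval_invariance (a b : ℝ → ℝ)
    (ha0 : ∀ t ∈ Set.Ici (0:ℝ), 0 ≤ a t) (hb0 : ∀ t ∈ Set.Ici (0:ℝ), 0 ≤ b t)
    (haloc : LocallyIntegrableOn a (Set.Ici 0) volume)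
    (hbloc : LocallyIntegrableOn b (Set.Ici 0) volume)
    (z₀ : ℝ) (hz₀ : z₀ ∈ Set.Icc (0:ℝ) 1)
    (z : ℝ → ℝ) (hz : Continuous z)
    (heq : ∀ t, 0 ≤ t → z t = z₀ + ∫ s in (0:ℝ)..t, (a s * (1 - z s) - b s * z s)) :
    ∀ t, 0 ≤ t → z t ∈ Set.Icc (0:ℝ) 1 := by
  intro t ht
  have hlow := gating_nonneg_aux a b ha0 hb0 haloc hbloc z₀ hz₀.1 z hz heq t ht
  -- upper bound via w = 1 - z
  have hupp : ∀ t, 0 ≤ t → 0 ≤ 1 - z t := by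
    apply gating_nonneg_aux b a hb0 ha0 hbloc haloc (1 - z₀) (by linarith [hz₀.2])
      (fun s => 1 - z s) (continuous_const.sub hz)
    intro u hu
    have := heq u hu
    have hint : (∫ s in (0:ℝ)..u, (b s * (1 - (1 - z s)) - a s * (1 - z s)))
        = ∫ s in (0:ℝ)..u, -(a s * (1 - z s) - b s * z s) := by
      apply intervalIntegral.integral_congr
      intro x _
      ring
    rw [hint, intervalIntegral.integral_neg]
    linarith
  exact ⟨hlow, by linarith [hupp t ht]⟩
end
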